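/- Let σ₃ = diag(1,-1), σ₊ = [[0,1],[0,0]], σ₋ = [[0,0],[1,0]]. For the matrices A(λ) = (λ + s + (Θ-K)/λ)σ₃ + y(1 - u/(2λ))σ₊ + (2/y)(K - Θ - Θ∞ + (K/(λu))(K-2Θ))σ₋ and B(λ) = λσ₃ + yσ₊ + (2/y)(K - Θ - Θ∞)σ₋, the zero-curvature (compatibility) condition ∂A/∂s - ∂B/∂λ + [A,B] = 0, imposed identically in λ, implies that u satisfies the Painlevé IV equation u'' = (u')²/(2u) + (3/2)u³ + 4su² + 2(s²+1-2Θ∞)u - 8Θ²/u, given the auxiliary relations y'/y = -u - 2s and K = (1/4)(-u' + u² + 2su + 4Θ). -/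

import Mathlib

/-!
Only the `(0,0)` entry of the zero-curvature equation is needed. In the commutator the factors
`y` and `2 / y` cancel, and the whole entry is `1 / λ` times
`-K' - u (K - Θ - Θ∞) - 2 K (K - 2Θ) / u`, so it says `u K' = -u² (K - Θ - Θ∞) - 2 K (K - 2Θ)`.
Substituting `K = (-u' + u² + 2 s u + 4Θ) / 4` turns this first-order equation for `K` into
Painlevé IV for `u`.
-/

open Matrix

/-- The Jimbo–Miwa `A`-matrix of the Painlevé IV Lax pair. -/
noncomputable def pivA (Θ Θinf : ℝ) (u y K : ℝ → ℝ) (s l : ℝ) : Matrix (Fin 2) (Fin 2) ℝ :=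
  !![l + s + (Θ - K s) / l, y s * (1 - u s / (2 * l));
     (2 / y s) * (K s - Θ - Θinf + (K s / (l * u s)) * (K s - 2 * Θ)),
       -(l + s + (Θ - K s) / l)]

/-- The Jimbo–Miwa `B`-matrix of the Painlevé IV Lax pair. -/
noncomputable def pivB (Θ Θinf : ℝ) (y K : ℝ → ℝ) (s l : ℝ) : Matrix (Fin 2) (Fin 2) ℝ :=
  !![l, y s; (2 / y s) * (K s - Θ - Θinf), -l]

section LaxPair

variable {Θ Θinf : ℝ} {u y K : ℝ → ℝ} {s l : ℝ}

lemma hasDerivAt_pivA_zero_zero {K' : ℝ} (hK : HasDerivAt K K' s) :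
    HasDerivAt (fun t => pivA Θ Θinf u y K t l 0 0) (1 - K' / l) s := by
  simp only [pivA, of_apply, cons_val', cons_val_zero, empty_val', cons_val_fin_one]
  exact (((hasDerivAt_id s).const_add l).add ((hK.const_sub Θ).div_const l)).congr_deriv
    (by ring)

lemma deriv_pivB_zero_zero : deriv (fun m => pivB Θ Θinf y K s m 0 0) l = 1 := by
  simp [pivB]

lemma pivA_mul_pivB_sub_pivB_mul_pivA_zero_zero (hy : y s ≠ 0) :
    (pivA Θ Θinf u y K s l * pivB Θ Θinf y K s l) 0 0 -
        (pivB Θ Θinf y K s l * pivA Θ Θinf u y K s l) 0 0 =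
      -(u s * (K s - Θ - Θinf) + 2 * K s * (K s - 2 * Θ) / u s) / l := by
  simp only [pivA, pivB, mul_apply, Fin.sum_univ_two, of_apply, cons_val', cons_val_zero,
    cons_val_one, empty_val', cons_val_fin_one]
  have hy2 : y s * (2 / y s) = 2 := mul_div_cancel₀ 2 hy
  linear_combination
    (-(u s * (K s - Θ - Θinf)) / (2 * l) - K s * (K s - 2 * Θ) / (l * u s)) * hy2

lemma riccati_of_zeroCurvature_zero_zero {K' : ℝ} (hl : l ≠ 0) (hu : u s ≠ 0) (hy : y s ≠ 0)
    (hK : HasDerivAt K K' s)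
    (hcompat : deriv (fun t => pivA Θ Θinf u y K t l 0 0) s -
        deriv (fun m => pivB Θ Θinf y K s m 0 0) l +
        ((pivA Θ Θinf u y K s l * pivB Θ Θinf y K s l) 0 0 -
          (pivB Θ Θinf y K s l * pivA Θ Θinf u y K s l) 0 0) = 0) :
    u s * K' = -(u s ^ 2 * (K s - Θ - Θinf)) - 2 * K s * (K s - 2 * Θ) := by
  rw [(hasDerivAt_pivA_zero_zero hK).deriv, deriv_pivB_zero_zero,
    pivA_mul_pivB_sub_pivB_mul_pivA_zero_zero hy] at hcompat
  field_simp at hcompat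
  linear_combination -hcompat

end LaxPair

lemma hasDerivAt_K_of_eq {u K : ℝ → ℝ} {Θ s : ℝ}
    (hK : ∀ t, K t = (1 / 4) * (-(deriv u t) + u t ^ 2 + 2 * t * u t + 4 * Θ))
    (hu : DifferentiableAt ℝ u s) (hu' : DifferentiableAt ℝ (deriv u) s) :
    HasDerivAt K ((1 / 4) * (-(deriv (deriv u) s) + 2 * u s * deriv u s + 2 * u s +
      2 * s * deriv u s)) s := by
  rw [show K = _ from funext hK]
  refine ((((hu'.hasDerivAt.neg.add (hu.hasDerivAt.pow 2)).add
    (((hasDerivAt_id s).const_mul 2).mul hu.hasDerivAt)).add_const (4 * Θ)).const_mul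
      (1 / 4 : ℝ)).congr_deriv ?_
  norm_num
  ring

lemma pivIV_of_riccati {𝕜 : Type*} [Field 𝕜] [CharZero 𝕜] {Θ Θinf s u u' u'' K K' : 𝕜}
    (hu : u ≠ 0) (hK : K = (1 / 4) * (-u' + u ^ 2 + 2 * s * u + 4 * Θ))
    (hK' : K' = (1 / 4) * (-u'' + 2 * u * u' + 2 * u + 2 * s * u'))
    (hric : u * K' = -(u ^ 2 * (K - Θ - Θinf)) - 2 * K * (K - 2 * Θ)) :
    u'' = u' ^ 2 / (2 * u) + (3 / 2) * u ^ 3 + 4 * s * u ^ 2 +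
      2 * (s ^ 2 + 1 - 2 * Θinf) * u - 8 * Θ ^ 2 / u := by
  subst hK hK'
  field_simp
  linear_combination (-8 : 𝕜) * hric

theorem lax_pair_compatibility_implies_pivIV_general (Θ Θinf : ℝ) (u y K : ℝ → ℝ)
    (hu : ContDiff ℝ 2 u)
    (hune : ∀ s, u s ≠ 0) (hyne : ∀ s, y s ≠ 0)
    (hKdef : ∀ s, K s = (1 / 4) * (-(deriv u s) + u s ^ 2 + 2 * s * u s + 4 * Θ))
    (hcompat : ∀ (s l : ℝ), l ≠ 0 → ∀ i j : Fin 2,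
      deriv (fun t => pivA Θ Θinf u y K t l i j) s -
        deriv (fun m => pivB Θ Θinf y K s m i j) l +
        ((pivA Θ Θinf u y K s l * pivB Θ Θinf y K s l) i j -
          (pivB Θ Θinf y K s l * pivA Θ Θinf u y K s l) i j) = 0) :
    ∀ s : ℝ,
      deriv (deriv u) s =
        (deriv u s) ^ 2 / (2 * u s) + (3 / 2) * u s ^ 3 + 4 * s * u s ^ 2 +
          2 * (s ^ 2 + 1 - 2 * Θinf) * u s - 8 * Θ ^ 2 / u s := by
  intro s
  have hu' : ContDiff ℝ 1 (deriv u) := hu.deriv' (n := 1)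
  have hK := hasDerivAt_K_of_eq hKdef (hu.differentiable two_ne_zero s)
    (hu'.differentiable one_ne_zero s)
  exact pivIV_of_riccati (hune s) (hKdef s) rfl <|
    riccati_of_zeroCurvature_zero_zero one_ne_zero (hune s) (hyne s) hK
      (hcompat s 1 one_ne_zero 0 0)

theorem lax_pair_compatibility_implies_pivIV (Θ Θinf : ℝ) (u y K : ℝ → ℝ)
    (hu : ContDiff ℝ 2 u) (hy : ContDiff ℝ 1 y) (hK : ContDiff ℝ 1 K)
    (hune : ∀ s, u s ≠ 0) (hyne : ∀ s, y s ≠ 0)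
    (hlogy : ∀ s, deriv y s / y s = -(u s) - 2 * s)
    (hKdef : ∀ s, K s = (1 / 4) * (-(deriv u s) + u s ^ 2 + 2 * s * u s + 4 * Θ))
    (hcompat : ∀ (s l : ℝ), l ≠ 0 → ∀ i j : Fin 2,
      deriv (fun t => pivA Θ Θinf u y K t l i j) s -
        deriv (fun m => pivB Θ Θinf y K s m i j) l +
        ((pivA Θ Θinf u y K s l * pivB Θ Θinf y K s l) i j -
          (pivB Θ Θinf y K s l * pivA Θ Θinf u y K s l) i j) = 0) :
    ∀ s : ℝ,
      deriv (deriv u) s =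
        (deriv u s) ^ 2 / (2 * u s) + (3 / 2) * u s ^ 3 + 4 * s * u s ^ 2 +
          2 * (s ^ 2 + 1 - 2 * Θinf) * u s - 8 * Θ ^ 2 / u s :=
  lax_pair_compatibility_implies_pivIV_general Θ Θinf u y K hu hune hyne hKdef hcompat
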